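/- For (p,q) ∈ ℝ², there exists s ∈ ℝ with p = s² − 1 and q = −75s⁵ + (345/4)s⁴ − 29s³ + (117/2)s² − 163/4 if and only if B(p,q) = 0 and p ≥ −1. -/

import Mathlib

/-!
With `p = t² − 1`, the second factor of `B` becomes a perfect square, `(p + 1)³(75p + 104)² =
(t³(75t² + 29))²`, and `q(s)` splits into the even part `(345/4)p² + 231p + 104` minus the odd
part `s³(75s² + 29)`. Hence `B(t² − 1, q) = 0` exactly when `q = q(t)` or `q = q(−t)`, and every
`p ≥ −1` is of the form `t² − 1`.
-/

/-- `B(p,q) = (q − (345/4)p² − 231p − 104)² − (p + 1)³(75p + 104)²`. -/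
noncomputable def B (p q : ℝ) : ℝ :=
  (q - (345 / 4) * p ^ 2 - 231 * p - 104) ^ 2 - (p + 1) ^ 3 * (75 * p + 104) ^ 2

noncomputable def pinchukQ (s : ℝ) : ℝ :=
  -75 * s ^ 5 + (345 / 4) * s ^ 4 - 29 * s ^ 3 + (117 / 2) * s ^ 2 - 163 / 4

lemma pinchukQ_eq_even_sub_odd (s : ℝ) :
    pinchukQ s =
      (345 / 4) * (s ^ 2 - 1) ^ 2 + 231 * (s ^ 2 - 1) + 104 - s ^ 3 * (75 * s ^ 2 + 29) := by
  unfold pinchukQ; ring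

lemma B_sq_sub_one (t q : ℝ) :
    B (t ^ 2 - 1) q =
      (q - (345 / 4) * (t ^ 2 - 1) ^ 2 - 231 * (t ^ 2 - 1) - 104) ^ 2 -
        (t ^ 3 * (75 * t ^ 2 + 29)) ^ 2 := by
  unfold B; ring

lemma B_sq_sub_one_eq_zero_iff (t q : ℝ) :
    B (t ^ 2 - 1) q = 0 ↔ q = pinchukQ t ∨ q = pinchukQ (-t) := by
  rw [B_sq_sub_one, sub_eq_zero, sq_eq_sq_iff_eq_or_eq_neg, pinchukQ_eq_even_sub_odd,
    pinchukQ_eq_even_sub_odd]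
  constructor <;> rintro (h | h)
  exacts [.inr (by linear_combination h), .inl (by linear_combination h),
    .inr (by linear_combination h), .inl (by linear_combination h)]

theorem mem_pinchuk_curve_iff (p q : ℝ) :
    (∃ s : ℝ, p = s ^ 2 - 1 ∧
        q = -75 * s ^ 5 + (345 / 4) * s ^ 4 - 29 * s ^ 3 + (117 / 2) * s ^ 2 - 163 / 4) ↔
      B p q = 0 ∧ p ≥ -1 := by
  constructor
  · rintro ⟨s, rfl, rfl⟩
    exact ⟨(B_sq_sub_one_eq_zero_iff s _).2 (.inl rfl), by linarith [sq_nonneg s]⟩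
  · rintro ⟨hB, hp⟩
    obtain ⟨t, rfl⟩ : ∃ t : ℝ, p = t ^ 2 - 1 :=
      ⟨√(p + 1), by rw [Real.sq_sqrt (by linarith)]; ring⟩
    rcases (B_sq_sub_one_eq_zero_iff t q).1 hB with rfl | rfl
    · exact ⟨t, rfl, rfl⟩
    · exact ⟨-t, by ring, rfl⟩
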